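/- Suppose $A$ admits a normalized invariant integral $w_G$. Then for every finite-dimensional $A$-comodule $(V, \rho)$ one has $w_G(\chi_V) = (\dim_K V^G) \cdot 1_K$. -/

import Mathlib

open TensorProduct

noncomputable section

variable {K : Type} [Field K] {A : Type} [CommRing A] [HopfAlgebra K A]

/-- Convolution product on the dual of a coalgebra:
`(w * w') a = ∑ w a₍₁₎ * w' a₍₂₎`. -/
def conv (w w' : Module.Dual K A) : Module.Dual K A :=
  (LinearMap.mul' K K).comp ((TensorProduct.map w w').comp (Coalgebra.comul (R := K)))

/-- Left convolution by `u`, as a linear endomorphism of the dual. -/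
def convL (u : Module.Dual K A) : Module.Dual K A →ₗ[K] Module.Dual K A where
  toFun := conv u
  map_add' x y := by
    unfold conv
    rw [TensorProduct.map_add_right, LinearMap.add_comp, LinearMap.comp_add]
  map_smul' c x := by
    show (LinearMap.mul' K K).comp ((TensorProduct.map u (c • x)).comp (Coalgebra.comul (R := K))) =
      c • (LinearMap.mul' K K).comp ((TensorProduct.map u x).comp (Coalgebra.comul (R := K)))
    rw [TensorProduct.map_smul_right, LinearMap.smul_comp, LinearMap.comp_smul]

/-- The span of `{u * w' : w' ∈ A*}`. -/
def rightOrbit (u : Module.Dual K A) : Submodule K (Module.Dual K A) :=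
  Submodule.span K {x | ∃ w', x = conv u w'}

lemma rightOrbit_mapsTo (u : Module.Dual K A) :
    ∀ x ∈ rightOrbit u, convL u x ∈ rightOrbit u := by
  intro x hx
  have h : Submodule.map (convL u) (rightOrbit u) ≤ rightOrbit u := by
    rw [rightOrbit, Submodule.map_span]
    apply Submodule.span_mono
    rintro y ⟨x, ⟨w', rfl⟩, rfl⟩
    exact ⟨conv u w', rfl⟩
  exact h ⟨x, hx, rfl⟩

/-- The trace of the finite-rank operator "left convolution by `u`", computed as the trace of
its restriction to the finite-dimensional invariant subspace `u * A*` containing its image. -/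
def convTrace (u : Module.Dual K A) : K :=
  LinearMap.trace K (rightOrbit u) ((convL u).restrict (rightOrbit_mapsTo u))

/-- The span of `{w₁ * w * w₂ : w₁, w₂ ∈ A*}`. -/
def twoSidedOrbit (w : Module.Dual K A) : Submodule K (Module.Dual K A) :=
  Submodule.span K {x | ∃ w₁ w₂, x = conv w₁ (conv w w₂)}

/-- `Ã = {w ∈ A* : dim_K (A* * w * A*) < ∞}`. -/
def tildeSet (K : Type) [Field K] (A : Type) [CommRing A] [HopfAlgebra K A] :
    Set (Module.Dual K A) :=
  {w | FiniteDimensional K (twoSidedOrbit w)}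

/-- A normalized invariant integral on `G = Spec A`:  `w_G(1) = 1` and
`w * w_G = w(1) w_G = w_G * w` for all `w ∈ A*`. -/
def IsNormalizedIntegral (wG : Module.Dual K A) : Prop :=
  wG 1 = 1 ∧ ∀ w : Module.Dual K A, conv w wG = w 1 • wG ∧ conv wG w = w 1 • wG
/-- `(V, ρ)` is an `A`-comodule: coassociativity and counit axioms. -/
def IsComodule {V : Type} [AddCommGroup V] [Module K V] (ρ : V →ₗ[K] V ⊗[K] A) : Prop :=
  ((TensorProduct.assoc K V A A).toLinearMap.comp ((ρ.rTensor A).comp ρ) =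
      (LinearMap.lTensor V (Coalgebra.comul (R := K))).comp ρ) ∧
  ((TensorProduct.rid K V).toLinearMap.comp
      ((LinearMap.lTensor V (Coalgebra.counit (R := K))).comp ρ) = LinearMap.id)

/-- The action of `w ∈ A*` on an `A`-comodule `(V, ρ)`: `w ⋅ v = (id ⊗ w)(ρ v)`.
As a map `π_V : A* → End_K(V)` it is a unital algebra homomorphism. -/
def coact {V : Type} [AddCommGroup V] [Module K V] (ρ : V →ₗ[K] V ⊗[K] A)
    (w : Module.Dual K A) : V →ₗ[K] V :=
  (TensorProduct.rid K V).toLinearMap.comp ((LinearMap.lTensor V w).comp ρ)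

/-- The character of a finite-dimensional comodule, computed with respect to a basis `b`:
`χ_V = ∑ i a_{ii}` where `ρ (b j) = ∑ i b i ⊗ a_{ij}` (independent of the basis). -/
def charOf {V : Type} [AddCommGroup V] [Module K V] {ι : Type} [Fintype ι]
    (b : Module.Basis ι K V) (ρ : V →ₗ[K] V ⊗[K] A) : A :=
  ∑ i, (TensorProduct.lid K A) ((LinearMap.rTensor A (b.coord i)) (ρ (b i)))

/-- The invariants `V^G = {v ∈ V : ρ v = v ⊗ 1}` of a comodule. -/
def invariants {V : Type} [AddCommGroup V] [Module K V] (ρ : V →ₗ[K] V ⊗[K] A) :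
    Submodule K V :=
  LinearMap.ker (ρ - (TensorProduct.mk K V A).flip 1)

/-! The action `π(w) = (id ⊗ w) ∘ ρ` of the convolution algebra `A*` on a comodule `V` is
multiplicative, `π(w * w') = π(w) ∘ π(w')`, by coassociativity of `ρ`. Invariance of `w_G`
gives `π(w) (π(w_G) v) = w(1) π(w_G) v` for all `w`; as the functionals on `A` separate
the points of `V ⊗ A`, this says `ρ (π(w_G) v) = π(w_G) v ⊗ 1`. Since `w_G(1) = 1`, `π(w_G)`
is the identity on `V^G`, so it is a projection onto `V^G` and its trace is `dim V^G`. On the other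
hand the trace of `π(w)` in any basis is `w(χ_V)`. -/

namespace TensorProduct

variable {R M N : Type*} [CommRing R] [AddCommGroup M] [Module R M] [AddCommGroup N]
  [Module R N]

lemma eq_of_forall_dual_rid_lTensor [Module.Free R N] {x y : M ⊗[R] N}
    (h : ∀ φ : Module.Dual R N,
      TensorProduct.rid R M (φ.lTensor M x) = TensorProduct.rid R M (φ.lTensor M y)) :
    x = y := by
  let c := Module.Free.chooseBasis R N
  have coord_eq (z : M ⊗[R] N) (i) :
      equivFinsuppOfBasisRight c z i = TensorProduct.rid R M ((c.coord i).lTensor M z) := by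
    induction z using TensorProduct.induction_on with
    | zero => simp
    | tmul m n => simp
    | add p q hp hq => simp [hp, hq]
  refine (equivFinsuppOfBasisRight c).injective (Finsupp.ext fun i => ?_)
  rw [coord_eq, coord_eq, h]

lemma dual_rid_lTensor (f : Module.Dual R M) (φ : Module.Dual R N) (x : M ⊗[R] N) :
    f (TensorProduct.rid R M (φ.lTensor M x)) = φ (TensorProduct.lid R N (f.rTensor N x)) := by
  induction x using TensorProduct.induction_on with
  | zero => simp
  | tmul m n => simp [mul_comm]
  | add p q hp hq => simp [hp, hq]

lemma rid_lTensor_rid_lTensor_assoc_symm (φ ψ : Module.Dual R N) (z : M ⊗[R] (N ⊗[R] N)) :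
    TensorProduct.rid R M (φ.lTensor M (TensorProduct.rid R (M ⊗[R] N)
        (ψ.lTensor (M ⊗[R] N) ((TensorProduct.assoc R M N N).symm z)))) =
      TensorProduct.rid R M ((LinearMap.mul' R R ∘ₗ map φ ψ).lTensor M z) := by
  induction z using TensorProduct.induction_on with
  | zero => simp
  | tmul m t =>
    induction t using TensorProduct.induction_on with
    | zero => simp
    | tmul n n' => simp [smul_smul, mul_comm]
    | add p q hp hq => simp only [tmul_add, map_add, hp, hq]
  | add p q hp hq => simp only [map_add, hp, hq]

end TensorProduct

section Comodule

variable {V : Type} [AddCommGroup V] [Module K V]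

lemma coact_apply (ρ : V →ₗ[K] V ⊗[K] A) (w : Module.Dual K A) (v : V) :
    coact ρ w v = TensorProduct.rid K V (w.lTensor V (ρ v)) := rfl

lemma coact_smul (ρ : V →ₗ[K] V ⊗[K] A) (c : K) (w : Module.Dual K A) :
    coact ρ (c • w) = c • coact ρ w := by
  ext v
  simp [coact_apply, LinearMap.lTensor_smul]

theorem coact_conv {ρ : V →ₗ[K] V ⊗[K] A} (hρ : IsComodule ρ) (w w' : Module.Dual K A) :
    coact ρ (conv w w') = coact ρ w ∘ₗ coact ρ w' := by
  have coassoc (v : V) : ρ.rTensor A (ρ v) =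
      (TensorProduct.assoc K V A A).symm ((Coalgebra.comul (R := K)).lTensor V (ρ v)) :=
    (LinearEquiv.eq_symm_apply _).2 (LinearMap.congr_fun hρ.1 v)
  have ρ_rid (y : V ⊗[K] K) :
      ρ (TensorProduct.rid K V y) = TensorProduct.rid K (V ⊗[K] A) (ρ.rTensor K y) := by
    induction y using TensorProduct.induction_on with
    | zero => simp
    | tmul v c => simp
    | add p q hp hq => simp only [map_add, hp, hq]
  have rTensor_lTensor (x : V ⊗[K] A) :
      ρ.rTensor K (w'.lTensor V x) = w'.lTensor (V ⊗[K] A) (ρ.rTensor A x) := by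
    rw [← LinearMap.comp_apply, LinearMap.rTensor_comp_lTensor,
      ← LinearMap.lTensor_comp_rTensor, LinearMap.comp_apply]
  ext v
  simp only [coact, conv, LinearMap.comp_apply, LinearEquiv.coe_coe, ρ_rid, rTensor_lTensor,
    coassoc, TensorProduct.rid_lTensor_rid_lTensor_assoc_symm, LinearMap.lTensor_comp_apply]

lemma mem_invariants {ρ : V →ₗ[K] V ⊗[K] A} {v : V} :
    v ∈ invariants ρ ↔ ρ v = v ⊗ₜ[K] (1 : A) := by
  simp [invariants, sub_eq_zero]

section Integral

variable {wG : Module.Dual K A} (hwG : IsNormalizedIntegral wG)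
include hwG

lemma coact_integral_mem_invariants {ρ : V →ₗ[K] V ⊗[K] A} (hρ : IsComodule ρ) (v : V) :
    coact ρ wG v ∈ invariants ρ := by
  rw [mem_invariants]
  refine TensorProduct.eq_of_forall_dual_rid_lTensor fun w => ?_
  calc TensorProduct.rid K V (w.lTensor V (ρ (coact ρ wG v)))
      = coact ρ (conv w wG) v := by rw [coact_conv hρ]; rfl
    _ = TensorProduct.rid K V (w.lTensor V (coact ρ wG v ⊗ₜ[K] (1 : A))) := by
        simp [(hwG.2 w).1, coact_smul]

lemma coact_integral_of_mem_invariants (ρ : V →ₗ[K] V ⊗[K] A) {v : V}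
    (hv : v ∈ invariants ρ) : coact ρ wG v = v := by
  rw [mem_invariants] at hv
  simp [coact_apply, hv, hwG.1]

lemma isProj_coact_integral {ρ : V →ₗ[K] V ⊗[K] A} (hρ : IsComodule ρ) :
    LinearMap.IsProj (invariants ρ) (coact ρ wG) :=
  ⟨coact_integral_mem_invariants hwG hρ, fun _ => coact_integral_of_mem_invariants hwG ρ⟩

end Integral

lemma trace_coact {ι : Type} [Fintype ι] (b : Module.Basis ι K V) (ρ : V →ₗ[K] V ⊗[K] A)
    (w : Module.Dual K A) :
    LinearMap.trace K V (coact ρ w) = w (charOf b ρ) := by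
  classical
  rw [LinearMap.trace_eq_matrix_trace K b, Matrix.trace, charOf, map_sum]
  refine Finset.sum_congr rfl fun i _ => ?_
  rw [Matrix.diag_apply, LinearMap.toMatrix_apply, ← b.coord_apply, coact_apply,
    TensorProduct.dual_rid_lTensor]

end Comodule

/-- If `w_G` is a normalized invariant integral on `G = Spec A`, then for every
finite-dimensional `A`-comodule `(V, ρ)` one has `w_G(χ_V) = dim_K V^G`. -/
theorem integral_of_character_eq_dim_invariants (wG : Module.Dual K A)
    (hwG : IsNormalizedIntegral wG) :
    ∀ (V : Type) [AddCommGroup V] [Module K V] [FiniteDimensional K V]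
      (ρ : V →ₗ[K] V ⊗[K] A), IsComodule ρ →
        ∀ (ι : Type) [Fintype ι] (b : Module.Basis ι K V),
          wG (charOf b ρ) = (Module.finrank K (invariants ρ) : K) := by
  intro V _ _ _ ρ hρ ι _ b
  rw [← trace_coact b ρ wG, (isProj_coact_integral hwG hρ).trace]

end
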